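/- Let 1 ≤ p ≤ q < ∞ and let x = (x_j)_{j∈ℤ} be a sequence of nonnegative reals. For the step function x̃(t) = Σ_j x_j χ_{[j,j+1)}(t) and any interval [a−r, a+r] with r > 1, there exist k ∈ ℤ and n ∈ ℕ₀ with n + 1 ≤ 4r such that ∫_{a−r}^{a+r} x̃(t)^p dt ≤ Σ_{j=k}^{k+n} x_j^p; consequently (2r)^{1/q−1/p} (∫_{a−r}^{a+r} x̃(t)^p dt)^{1/p} ≤ 2^{1/p−1/q} ‖x‖*_{ℓ^p_q}. -/

import Mathlib

open scoped ENNReal BigOperators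

/-- Discrete Morrey norm over symmetric index sets `S_{m,N} = {m-N, …, m+N}`. -/
noncomputable def dnorm (p q : ℝ) (x : ℤ → ℝ) : ℝ≥0∞ :=
  ⨆ (m : ℤ) (N : ℕ), ((2 * N + 1 : ℝ≥0∞) ^ (1 / q - 1 / p)) *
    ENNReal.ofReal ((∑ j ∈ Finset.Icc (m - N) (m + N), |x j| ^ p) ^ (1 / p))

/-- Discrete Morrey norm over arbitrary index intervals `S*_{k,n} = {k, …, k+n}`. -/
noncomputable def dnormStar (p q : ℝ) (x : ℤ → ℝ) : ℝ≥0∞ :=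
  ⨆ (k : ℤ) (n : ℕ), ((n + 1 : ℝ≥0∞) ^ (1 / q - 1 / p)) *
    ENNReal.ofReal ((∑ j ∈ Finset.Icc k (k + n), |x j| ^ p) ^ (1 / p))

/-- Morrey norm on the real line. -/
noncomputable def mnormR (p q : ℝ) (f : ℝ → ℝ) : ℝ≥0∞ :=
  ⨆ (a : ℝ) (r : Set.Ioi (0 : ℝ)),
    ENNReal.ofReal ((2 * r.1) ^ (1 / q - 1 / p) *
      (∫ t in (a - r.1)..(a + r.1), |f t| ^ p) ^ (1 / p))

/-- The step function `x̃(t) = ∑_j x_j χ_{[j,j+1)}(t)`, i.e. `x̃(t) = x ⌊t⌋`. -/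
noncomputable def step (x : ℤ → ℝ) : ℝ → ℝ := fun t => x ⌊t⌋

/-- The set `S_n = {1 + 2^v + ⋯ + 2^{(n-1)v} + j·2^{nw} : j = 1, …, 2^{n(v-w)}}`. -/
def Sn (v w n : ℕ) : Set ℤ :=
  {m | ∃ j : ℕ, 1 ≤ j ∧ j ≤ 2 ^ (n * (v - w)) ∧
    m = ((∑ i ∈ Finset.range n, 2 ^ (i * v) : ℕ) : ℤ) + (j : ℤ) * 2 ^ (n * w)}

/-- The sequence with `x_j = 1` iff `j ∈ {0,1} ∪ ⋃_{n≥1} S_n`, `x_j = 0` otherwise. -/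
noncomputable def xseq (v w : ℕ) : ℤ → ℝ :=
  Set.indicator (({0, 1} : Set ℤ) ∪ ⋃ n ∈ Set.Ici 1, Sn v w n) 1

/-- `β_n = 1 + 2^v + ⋯ + 2^{nv}`. -/
def beta (v n : ℕ) : ℕ := ∑ i ∈ Finset.range (n + 1), 2 ^ (i * v)

/-!
The step function `x̃ ^ p` is nonnegative, so its integral over `[a - r, a + r]` is at most its
integral over the union of the unit intervals `[j, j + 1)` with `⌊a - r⌋ ≤ j ≤ ⌊a + r⌋`, which is
the sum of `x_j ^ p` over these `n + 1 < 2r + 2 ≤ 4r` indices (`n = ⌊a + r⌋ - ⌊a - r⌋`).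
Since `1/q - 1/p ≤ 0`, replacing the length `2r` by `n + 1 ≤ 2 · 2r` in the Morrey weight costs
at most the factor `2 ^ (1/p - 1/q)`.
-/

open MeasureTheory

lemma eqOn_comp_floor_Ico {α : Type*} (g : ℤ → α) (j : ℤ) :
    Set.EqOn (fun t : ℝ => g ⌊t⌋) (fun _ => g j) (Set.Ico (j : ℝ) (j + 1)) :=
  fun _ ht => congrArg g (Int.floor_eq_iff.mpr ht)

section FloorComposition

variable {E : Type*} [NormedAddCommGroup E] (g : ℤ → E)

lemma intervalIntegrable_comp_floor_unit (j : ℤ) :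
    IntervalIntegrable (fun t : ℝ => g ⌊t⌋) volume j (j + 1) := by
  rw [intervalIntegrable_iff_integrableOn_Ico_of_le (by linarith)]
  exact (integrableOn_const (by simp)).congr_fun (eqOn_comp_floor_Ico g j).symm measurableSet_Ico

lemma intervalIntegrable_comp_floor_Icc {k l : ℤ} (hkl : k ≤ l) :
    IntervalIntegrable (fun t : ℝ => g ⌊t⌋) volume k (l + 1) := by
  obtain ⟨n, rfl⟩ : ∃ n : ℕ, l = k + n := ⟨(l - k).toNat, by omega⟩
  have := IntervalIntegrable.trans_iterate (a := fun i : ℕ => ((k + i : ℤ) : ℝ)) (n := n + 1)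
    fun i _ => by simpa [add_assoc] using intervalIntegrable_comp_floor_unit g (k + i)
  simpa [add_assoc] using this

variable [NormedSpace ℝ E] [CompleteSpace E]

lemma integral_comp_floor_unit (j : ℤ) : ∫ t in (j : ℝ)..j + 1, g ⌊t⌋ = g j := by
  rw [intervalIntegral.integral_of_le (by linarith), ← integral_Ico_eq_integral_Ioc,
    setIntegral_congr_fun measurableSet_Ico (eqOn_comp_floor_Ico g j)]
  simp

lemma integral_comp_floor_eq_sum_Icc {k l : ℤ} (hkl : k ≤ l) :
    ∫ t in (k : ℝ)..l + 1, g ⌊t⌋ = ∑ j ∈ Finset.Icc k l, g j := by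
  obtain ⟨n, rfl⟩ : ∃ n : ℕ, l = k + n := ⟨(l - k).toNat, by omega⟩
  have hunit (i : ℕ) : ∫ t in (k : ℝ) + i..(k : ℝ) + (i + 1 : ℕ), g ⌊t⌋ = g (k + i) := by
    simpa [add_assoc] using integral_comp_floor_unit g (k + i)
  have hsum := intervalIntegral.sum_integral_adjacent_intervals
    (a := fun i : ℕ => (k : ℝ) + i) (n := n + 1)
    fun i _ => by simpa [add_assoc] using intervalIntegrable_comp_floor_unit g (k + i)
  simp_rw [hunit] at hsum
  rw [Int.Icc_eq_finset_map, Finset.sum_map, show (k + n + 1 - k).toNat = n + 1 by omega]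
  simpa [add_assoc] using hsum.symm

end FloorComposition

lemma integral_comp_floor_le_sum_Icc {g : ℤ → ℝ} (hg : ∀ j, 0 ≤ g j) {a b : ℝ} (hab : a ≤ b) :
    ∫ t in a..b, g ⌊t⌋ ≤ ∑ j ∈ Finset.Icc ⌊a⌋ ⌊b⌋, g j := by
  have hfl : ⌊a⌋ ≤ ⌊b⌋ := Int.floor_le_floor hab
  rw [← integral_comp_floor_eq_sum_Icc g hfl]
  exact intervalIntegral.integral_mono_interval (Int.floor_le a) hab (Int.lt_floor_add_one b).le
    (Filter.Eventually.of_forall fun t => hg _) (intervalIntegrable_comp_floor_Icc g hfl)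

lemma floor_sub_floor_lt (a b : ℝ) : ((⌊b⌋ - ⌊a⌋ : ℤ) : ℝ) < b - a + 1 := by
  push_cast
  linarith [Int.floor_le b, Int.sub_one_lt_floor a]

lemma rpow_le_two_rpow_neg_mul_rpow {s m e : ℝ} (hm : 0 < m) (hms : m ≤ 2 * s) (he : e ≤ 0) :
    s ^ e ≤ 2 ^ (-e) * m ^ e :=
  calc s ^ e = 2 ^ (-e) * (2 * s) ^ e := by
        rw [Real.mul_rpow zero_le_two (by linarith), ← mul_assoc,
          ← Real.rpow_add zero_lt_two, neg_add_cancel, Real.rpow_zero, one_mul]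
    _ ≤ 2 ^ (-e) * m ^ e :=
        mul_le_mul_of_nonneg_left (Real.rpow_le_rpow_of_nonpos hm hms he) (by positivity)

lemma ofReal_rpow_mul_le_dnormStar (p q : ℝ) (x : ℤ → ℝ) (k : ℤ) (n : ℕ) :
    ENNReal.ofReal (((n : ℝ) + 1) ^ (1 / q - 1 / p) *
        (∑ j ∈ Finset.Icc k (k + n), |x j| ^ p) ^ (1 / p)) ≤ dnormStar p q x := by
  rw [ENNReal.ofReal_mul (by positivity), ← ENNReal.ofReal_rpow_of_pos (by positivity)]
  unfold dnormStar
  exact_mod_cast le_iSup₂ (f := fun (k : ℤ) (n : ℕ) => ((n + 1 : ℝ≥0∞) ^ (1 / q - 1 / p)) *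
    ENNReal.ofReal ((∑ j ∈ Finset.Icc k (k + n), |x j| ^ p) ^ (1 / p))) k n

theorem stmt17 (p q : ℝ) (hp : 1 ≤ p) (hpq : p ≤ q) (x : ℤ → ℝ) (hx : ∀ j, 0 ≤ x j)
    (a r : ℝ) (hr : 1 < r) :
    ∃ k : ℤ, ∃ n : ℕ, ((n : ℝ) + 1 ≤ 4 * r ∧
      (∫ t in (a - r)..(a + r), step x t ^ p) ≤ ∑ j ∈ Finset.Icc k (k + n), x j ^ p) ∧
      ENNReal.ofReal ((2 * r) ^ (1 / q - 1 / p) *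
          (∫ t in (a - r)..(a + r), step x t ^ p) ^ (1 / p))
        ≤ ENNReal.ofReal ((2 : ℝ) ^ (1 / p - 1 / q)) * dnormStar p q x := by
  have hp0 : 0 < p := by linarith
  set n := (⌊a + r⌋ - ⌊a - r⌋).toNat
  have hfloor : ⌊a - r⌋ + n = ⌊a + r⌋ := by
    have := Int.floor_le_floor (show a - r ≤ a + r by linarith); omega
  have hn : (n : ℝ) + 1 ≤ 4 * r := by
    have := floor_sub_floor_lt (a - r) (a + r)
    rw [← hfloor, add_sub_cancel_left] at this
    push_cast at this; linarith
  have hI : (∫ t in (a - r)..(a + r), step x t ^ p)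
      ≤ ∑ j ∈ Finset.Icc ⌊a - r⌋ (⌊a - r⌋ + n), x j ^ p :=
    hfloor ▸ integral_comp_floor_le_sum_Icc (fun j => Real.rpow_nonneg (hx j) p) (by linarith)
  refine ⟨⌊a - r⌋, n, ⟨hn, hI⟩, ?_⟩
  have he : 1 / q - 1 / p ≤ 0 := sub_nonpos.2 (one_div_le_one_div_of_le hp0 hpq)
  have hI0 : 0 ≤ ∫ t in (a - r)..(a + r), step x t ^ p :=
    intervalIntegral.integral_nonneg (by linarith) fun t _ => Real.rpow_nonneg (hx _) p
  have habs : ∑ j ∈ Finset.Icc ⌊a - r⌋ (⌊a - r⌋ + n), |x j| ^ p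
      = ∑ j ∈ Finset.Icc ⌊a - r⌋ (⌊a - r⌋ + n), x j ^ p :=
    Finset.sum_congr rfl fun j _ => by rw [abs_of_nonneg (hx j)]
  calc ENNReal.ofReal ((2 * r) ^ (1 / q - 1 / p) *
          (∫ t in (a - r)..(a + r), step x t ^ p) ^ (1 / p))
      ≤ ENNReal.ofReal (2 ^ (1 / p - 1 / q) * (((n : ℝ) + 1) ^ (1 / q - 1 / p) *
          (∑ j ∈ Finset.Icc ⌊a - r⌋ (⌊a - r⌋ + n), |x j| ^ p) ^ (1 / p))) := by
        rw [habs, ← mul_assoc, ← neg_sub (1 / q)]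
        refine ENNReal.ofReal_le_ofReal (mul_le_mul ?_ ?_ (by positivity) (by positivity))
        · exact rpow_le_two_rpow_neg_mul_rpow (by positivity) (by linarith) he
        · exact Real.rpow_le_rpow hI0 hI (by positivity)
    _ ≤ ENNReal.ofReal (2 ^ (1 / p - 1 / q)) * dnormStar p q x := by
        rw [ENNReal.ofReal_mul (by positivity)]
        exact mul_le_mul_right (ofReal_rpow_mul_le_dnormStar p q x _ n) _
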